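/- arXiv:1804.01276 — 8 statements merged into one kernel-verified Lean document; each statement's English description precedes it below -/
import Mathlib

section
/- Adding an edge (u, v) when there is no path from v back to u does not change strong connectivity: if v does not reach u under E, and E' is obtained from E by adding the edge (u, v), then for all vertices x, y, x and y are strongly connected under E' if and only if they are strongly connected under E. -/
def SConn {V : Type*} (E : V → V → Prop) (x y : V) : Prop :=
  Relation.ReflTransGen E x y ∧ Relation.ReflTransGen E y x

/-!
An `E'`-path that is not an `E`-path must use the new edge, so it runs `x ⟶ u`, `v ⟶ y` in `E`.
If both `x ⟶ y` and `y ⟶ x` are `E'`-paths and one of them uses the new edge, splicing it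
with the other yields an `E`-path from `v` to `u`, which is excluded.
-/

open Relation

section

variable {V : Type*} {E E' : V → V → Prop} {u v : V}

lemma reflTransGen_or_through_edge (hE' : ∀ a b, E' a b → E a b ∨ (a = u ∧ b = v))
    {x y : V} (h : ReflTransGen E' x y) :
    ReflTransGen E x y ∨ (ReflTransGen E x u ∧ ReflTransGen E v y) := by
  induction h with
  | refl => exact .inl .refl
  | tail _ hbc ih =>
    rcases hE' _ _ hbc with hbc | ⟨rfl, rfl⟩
    · exact ih.imp (·.tail hbc) (fun ⟨hxu, hvb⟩ => ⟨hxu, hvb.tail hbc⟩)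
    · exact .inr ⟨ih.elim id (·.1), .refl⟩

lemma reflTransGen_of_cycle_of_not_reflTransGen_back
    (hE' : ∀ a b, E' a b → E a b ∨ (a = u ∧ b = v)) (hvu : ¬ ReflTransGen E v u)
    {x y : V} (hxy : ReflTransGen E' x y) (hyx : ReflTransGen E' y x) :
    ReflTransGen E x y := by
  refine (reflTransGen_or_through_edge hE' hxy).resolve_right fun ⟨hxu, hvy⟩ => hvu ?_
  rcases reflTransGen_or_through_edge hE' hyx with hyx | ⟨-, hvx⟩
  · exact hvy.trans (hyx.trans hxu)
  · exact hvx.trans hxu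

end

theorem add_edge_no_back_path {V : Type*} (E : V → V → Prop) (u v : V)
    (hvu : ¬ Relation.ReflTransGen E v u)
    (E' : V → V → Prop) (hE' : ∀ a b, E' a b ↔ E a b ∨ (a = u ∧ b = v)) :
    ∀ x y : V, SConn E' x y ↔ SConn E x y := by
  intro x y
  have hsplit : ∀ a b, E' a b → E a b ∨ (a = u ∧ b = v) := fun a b => (hE' a b).1
  have hle : E ≤ E' := fun a b h => (hE' a b).2 (.inl h)
  constructor
  · rintro ⟨hxy, hyx⟩
    exact ⟨reflTransGen_of_cycle_of_not_reflTransGen_back hsplit hvu hxy hyx,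
      reflTransGen_of_cycle_of_not_reflTransGen_back hsplit hvu hyx hxy⟩
  · rintro ⟨hxy, hyx⟩
    exact ⟨ReflTransGen.mono hle _ _ hxy, ReflTransGen.mono hle _ _ hyx⟩
end

section
/- Characterization of the strongly connected component of u after inserting the edge (u, v): if E' is obtained from E by adding the edge (u, v), then for every vertex x, x is strongly connected to u under E' if and only if x reaches u under E and (u reaches x under E or v reaches x under E). -/
lemma rtg_insert {V : Type*} (E : V → V → Prop) (u v : V)
    (E' : V → V → Prop) (hE' : ∀ a b, E' a b ↔ E a b ∨ (a = u ∧ b = v))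
    {x y : V} :
    Relation.ReflTransGen E' x y ↔
      Relation.ReflTransGen E x y ∨
        (Relation.ReflTransGen E x u ∧ Relation.ReflTransGen E v y) := by
  constructor
  · intro h
    induction h with
    | refl => exact Or.inl .refl
    | tail hb e ih =>
      rcases (hE' _ _).1 e with he | ⟨rfl, rfl⟩
      · rcases ih with h1 | ⟨h1, h2⟩
        · exact Or.inl (h1.tail he)
        · exact Or.inr ⟨h1, h2.tail he⟩
      · rcases ih with h1 | ⟨h1, _⟩
        · exact Or.inr ⟨h1, .refl⟩
        · exact Or.inr ⟨h1, .refl⟩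
  · rintro (h | ⟨h1, h2⟩)
    · exact Relation.ReflTransGen.mono (fun a b hab => (hE' a b).2 (Or.inl hab)) _ _ h
    · exact ((Relation.ReflTransGen.mono (fun a b hab => (hE' a b).2 (Or.inl hab)) _ _ h1).tail
        ((hE' u v).2 (Or.inr ⟨rfl, rfl⟩))).trans
        (Relation.ReflTransGen.mono (fun a b hab => (hE' a b).2 (Or.inl hab)) _ _ h2)

theorem scc_of_u_after_insert {V : Type*} (E : V → V → Prop) (u v : V)
    (E' : V → V → Prop) (hE' : ∀ a b, E' a b ↔ E a b ∨ (a = u ∧ b = v)) :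
    ∀ x : V, SConn E' x u ↔
      Relation.ReflTransGen E x u ∧
        (Relation.ReflTransGen E u x ∨ Relation.ReflTransGen E v x) := by
  intro x
  constructor
  · rintro ⟨hxu, hux⟩
    rcases (rtg_insert E u v E' hE').1 hxu with h | ⟨h, _⟩ <;>
    · refine ⟨h, ?_⟩
      rcases (rtg_insert E u v E' hE').1 hux with h2 | ⟨_, h2⟩
      exacts [Or.inl h2, Or.inr h2]
  · rintro ⟨h1, h2 | h2⟩
    · exact ⟨(rtg_insert E u v E' hE').2 (Or.inl h1),
        (rtg_insert E u v E' hE').2 (Or.inl h2)⟩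
    · exact ⟨(rtg_insert E u v E' hE').2 (Or.inl h1),
        (rtg_insert E u v E' hE').2 (Or.inr ⟨.refl, h2⟩)⟩
end

section
/- Only vertices on paths from v to u are affected by inserting the edge (u, v): if E' is obtained from E by adding the edge (u, v), and vertices x and y are strongly connected under E' but not strongly connected under E, then under E, v reaches x and x reaches u (so x lies on a path from v to u). -/
open Relation

theorem Relation.ReflTransGen.of_or_edge {V : Type*} {E : V → V → Prop} {u v a b : V}
    (h : ReflTransGen (fun c d => E c d ∨ (c = u ∧ d = v)) a b) :
    ReflTransGen E a b ∨ (ReflTransGen E a u ∧ ReflTransGen E v b) := by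
  induction h with
  | refl => exact .inl .refl
  | tail _ hcd ih =>
    rcases hcd with hE | ⟨rfl, rfl⟩
    · exact ih.imp (·.tail hE) fun ⟨hau, hvc⟩ => ⟨hau, hvc.tail hE⟩
    · exact .inr ⟨ih.elim id And.left, .refl⟩

theorem affected_vertices_on_path {V : Type*} (E : V → V → Prop) (u v : V)
    (E' : V → V → Prop) (hE' : ∀ a b, E' a b ↔ E a b ∨ (a = u ∧ b = v))
    (x y : V) (h' : SConn E' x y) (h : ¬ SConn E x y) :
    Relation.ReflTransGen E v x ∧ Relation.ReflTransGen E x u := by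
  obtain rfl : E' = fun a b => E a b ∨ (a = u ∧ b = v) := funext₂ fun a b => propext (hE' a b)
  obtain ⟨hxy, hyx⟩ := h'
  rcases hxy.of_or_edge with pxy | ⟨pxu, pvy⟩ <;> rcases hyx.of_or_edge with pyx | ⟨pyu, pvx⟩
  · exact absurd ⟨pxy, pyx⟩ h
  · exact ⟨pvx, pxy.trans pyu⟩
  · exact ⟨pvy.trans pyx, pxu⟩
  · exact ⟨pvx, pxu⟩
end

section
/- Merging correctness for edge insertion: if v reaches u under E and E' is obtained from E by adding the edge (u, v), then every vertex w lying on a path from v to u under E (i.e. such that v reaches w and w reaches u under E) is strongly connected to u under E'. -/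
theorem merge_correctness {V : Type*} (E : V → V → Prop) (u v : V)
    (hvu : Relation.ReflTransGen E v u)
    (E' : V → V → Prop) (hE' : ∀ a b, E' a b ↔ E a b ∨ (a = u ∧ b = v)) :
    ∀ w : V, Relation.ReflTransGen E v w → Relation.ReflTransGen E w u →
      SConn E' w u := by
  intro w hvw hwu
  have mono : ∀ {x y}, Relation.ReflTransGen E x y → Relation.ReflTransGen E' x y := by
    intro x y h
    exact Relation.ReflTransGen.mono (fun a b hab => (hE' a b).mpr (Or.inl hab)) _ _ h
  have huv : Relation.ReflTransGen E' u v :=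
    Relation.ReflTransGen.single ((hE' u v).mpr (Or.inr ⟨rfl, rfl⟩))
  exact ⟨mono hwu, huv.trans (mono hvw)⟩
end

section
/- Reachability decomposition under edge deletion: suppose E u v holds and E'' is obtained from E by removing the edge (u, v). Then for all vertices x, y: x reaches y under E if and only if x reaches y under E'', or (x reaches u under E'' and v reaches y under E''). -/
/-!
A path that uses the edge `(u, v)` splits into the part before its first use and the part after
its last use; both avoid the edge.
-/

namespace Relation

variable {α : Type*} {r s : α → α → Prop} {u v x y : α}

theorem ReflTransGen.or_through_of_le_insert (hrs : ∀ a b, r a b → s a b ∨ (a = u ∧ b = v))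
    (hxy : ReflTransGen r x y) :
    ReflTransGen s x y ∨ (ReflTransGen s x u ∧ ReflTransGen s v y) := by
  induction hxy with
  | refl => exact .inl .refl
  | @tail b c _ hbc ih =>
    rcases hrs b c hbc with hs | ⟨rfl, rfl⟩
    · exact ih.imp (·.tail hs) (And.imp_right (·.tail hs))
    · exact .inr ⟨ih.elim id And.left, .refl⟩

theorem ReflTransGen.of_or_through (hsr : s ≤ r) (huv : r u v)
    (h : ReflTransGen s x y ∨ (ReflTransGen s x u ∧ ReflTransGen s v y)) :
    ReflTransGen r x y := by
  rcases h with hxy | ⟨hxu, hvy⟩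
  · exact ReflTransGen.mono hsr _ _ hxy
  · exact ((ReflTransGen.mono hsr _ _ hxu).tail huv).trans (ReflTransGen.mono hsr _ _ hvy)

end Relation

theorem reach_remove_edge {V : Type*} (E : V → V → Prop) (u v : V)
    (huv : E u v)
    (E'' : V → V → Prop) (hE'' : ∀ a b, E'' a b ↔ E a b ∧ ¬(a = u ∧ b = v)) :
    ∀ x y : V, Relation.ReflTransGen E x y ↔
      Relation.ReflTransGen E'' x y ∨
        (Relation.ReflTransGen E'' x u ∧ Relation.ReflTransGen E'' v y) := by
  have hE_le : ∀ a b, E a b → E'' a b ∨ (a = u ∧ b = v) := fun a b hab =>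
    (em (a = u ∧ b = v)).symm.imp (fun hne => (hE'' a b).2 ⟨hab, hne⟩) id
  have hE''_le : E'' ≤ E := fun a b hab => ((hE'' a b).1 hab).1
  exact fun x y => ⟨Relation.ReflTransGen.or_through_of_le_insert hE_le,
    Relation.ReflTransGen.of_or_through hE''_le huv⟩
end

section
/- Removing an edge whose endpoints lie in different strongly connected components does not change strong connectivity: if u and v are not strongly connected under E, and E'' is obtained from E by removing the edge (u, v), then for all vertices x, y, x and y are strongly connected under E'' if and only if they are strongly connected under E. -/
theorem remove_edge_between_sccs {V : Type*} (E : V → V → Prop) (u v : V)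
    (huv : ¬ SConn E u v)
    (E'' : V → V → Prop) (hE'' : ∀ a b, E'' a b ↔ E a b ∧ ¬(a = u ∧ b = v)) :
    ∀ x y : V, SConn E'' x y ↔ SConn E x y := by
  have sub : ∀ a b, Relation.ReflTransGen E'' a b → Relation.ReflTransGen E a b := by
    intro a b h
    exact Relation.ReflTransGen.mono (fun p q hpq => ((hE'' p q).mp hpq).1) a b h
  -- key lemma
  have key : ∀ a b, Relation.ReflTransGen E a b →
      Relation.ReflTransGen E'' a b ∨
      (E u v ∧ Relation.ReflTransGen E a u ∧ Relation.ReflTransGen E v b) := by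
    intro a b h
    induction h using Relation.ReflTransGen.head_induction_on with
    | refl => exact Or.inl Relation.ReflTransGen.refl
    | head hac _ ih =>
      rename_i c d _
      cases ih with
      | inl hpath =>
        by_cases hcd : c = u ∧ d = v
        · exact Or.inr ⟨hcd.1 ▸ hcd.2 ▸ hac, hcd.1 ▸ Relation.ReflTransGen.refl,
            hcd.2 ▸ sub _ _ hpath⟩
        · exact Or.inl (Relation.ReflTransGen.head ((hE'' c d).mpr ⟨hac, hcd⟩) hpath)
      | inr hr =>
        exact Or.inr ⟨hr.1, Relation.ReflTransGen.head hac hr.2.1, hr.2.2⟩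
  intro x y
  constructor
  · rintro ⟨h1, h2⟩
    exact ⟨sub _ _ h1, sub _ _ h2⟩
  · rintro ⟨hxy, hyx⟩
    have hx : Relation.ReflTransGen E'' x y := by
      rcases key x y hxy with h | ⟨he, hxu, hvy⟩
      · exact h
      · exact absurd ⟨Relation.ReflTransGen.single he, hvy.trans (hyx.trans hxu)⟩ huv
    have hy : Relation.ReflTransGen E'' y x := by
      rcases key y x hyx with h | ⟨he, hyu, hvx⟩
      · exact h
      · exact absurd ⟨Relation.ReflTransGen.single he, hvx.trans (hxy.trans hyu)⟩ huv
    exact ⟨hx, hy⟩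
end

section
/- Removing an edge that has an alternative path does not change strong connectivity: if E u v holds, E'' is obtained from E by removing the edge (u, v), and u still reaches v under E'', then for all vertices x, y, x and y are strongly connected under E'' if and only if they are strongly connected under E. -/
theorem remove_edge_with_alt_path {V : Type*} (E : V → V → Prop) (u v : V)
    (huv : E u v)
    (E'' : V → V → Prop) (hE'' : ∀ a b, E'' a b ↔ E a b ∧ ¬(a = u ∧ b = v))
    (halt : Relation.ReflTransGen E'' u v) :
    ∀ x y : V, SConn E'' x y ↔ SConn E x y := by
  have key : ∀ x y, Relation.ReflTransGen E x y → Relation.ReflTransGen E'' x y := by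
    intro x y h
    induction h with
    | refl => exact Relation.ReflTransGen.refl
    | tail _ hbc ih =>
      rename_i b c _
      by_cases hc : b = u ∧ c = v
      · exact ih.trans (hc.1 ▸ hc.2 ▸ halt)
      · exact ih.tail ((hE'' b c).mpr ⟨hbc, hc⟩)
  have mono : ∀ x y, Relation.ReflTransGen E'' x y → Relation.ReflTransGen E x y :=
    fun x y h => Relation.ReflTransGen.mono (fun a b hab => ((hE'' a b).mp hab).1) x y h
  intro x y
  exact ⟨fun ⟨h1, h2⟩ => ⟨mono _ _ h1, mono _ _ h2⟩,
         fun ⟨h1, h2⟩ => ⟨key _ _ h1, key _ _ h2⟩⟩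
end

section
/- Only the strongly connected component containing a deleted vertex can split: let E''' be obtained from E by removing the vertex w together with all its incident edges, i.e. E''' a b := E a b ∧ a ≠ w ∧ b ≠ w. If vertices x and y are strongly connected under E and x is not strongly connected to w under E, then x and y are strongly connected under E'''. -/
namespace Relation.ReflTransGen

variable {V : Type*} {E : V → V → Prop} {p : V → Prop} {a b : V}

theorem restrict_or_exists_not_mem (hb : p b) (h : ReflTransGen E a b) :
    ReflTransGen (fun u v => E u v ∧ p u ∧ p v) a b ∨
      ∃ c, ¬ p c ∧ ReflTransGen E a c ∧ ReflTransGen E c b := by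
  induction h with
  | refl => exact .inl .refl
  | @tail c d hac hcd ih =>
    by_cases hc : p c
    · rcases ih hc with hrestr | ⟨e, he, hae, hec⟩
      · exact .inl (hrestr.tail ⟨hcd, hc, hb⟩)
      · exact .inr ⟨e, he, hae, hec.tail hcd⟩
    · exact .inr ⟨c, hc, hac, .single hcd⟩

end Relation.ReflTransGen

open Relation in
theorem SConn.restrict {V : Type*} {E : V → V → Prop} {p : V → Prop} {x y : V}
    (hxy : SConn E x y) (hcomp : ∀ c, SConn E x c → p c) :
    SConn (fun u v => E u v ∧ p u ∧ p v) x y := by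
  obtain ⟨hxy, hyx⟩ := hxy
  constructor
  · rcases hxy.restrict_or_exists_not_mem (hcomp y ⟨hxy, hyx⟩) with hrestr | ⟨c, hc, hxc, hcy⟩
    · exact hrestr
    · exact absurd (hcomp c ⟨hxc, hcy.trans hyx⟩) hc
  · rcases hyx.restrict_or_exists_not_mem (hcomp x ⟨.refl, .refl⟩) with hrestr | ⟨c, hc, hyc, hcx⟩
    · exact hrestr
    · exact absurd (hcomp c ⟨hxy.trans hyc, hcx⟩) hc

theorem only_scc_of_deleted_vertex_splits {V : Type*} (E : V → V → Prop) (w : V)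
    (E''' : V → V → Prop) (hE''' : ∀ a b, E''' a b ↔ E a b ∧ a ≠ w ∧ b ≠ w)
    (x y : V) (hxy : SConn E x y) (hxw : ¬ SConn E x w) :
    SConn E''' x y := by
  obtain rfl : E''' = fun a b => E a b ∧ a ≠ w ∧ b ≠ w := funext₂ fun a b => propext (hE''' a b)
  exact hxy.restrict fun c hxc => by rintro rfl; exact hxw hxc
end
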